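/- arXiv:2605.04796 — 8 statements merged into one kernel-verified Lean document; each statement's English description precedes it below -/
import Mathlib

section
/- Consider the synchronous machine model in the dq-frame: differentiable functions δ, ω, i_d, i_q : ℝ → ℝ satisfying for all t: δ'(t) = ω(t) − ω_s, J·ω'(t) = −D·ω(t) − b·i_q(t) (mechanical torque input T_m = 0), L·i_d'(t) = −R·i_d(t) + L·ω(t)·i_q(t) − R_L·I·sin(δ(t)), and L·i_q'(t) = −R·i_q(t) − L·ω(t)·i_d(t) + b·ω(t) − R_L·I·cos(δ(t)). Define the storage function V(t) = (1/2)·J·ω(t)² + (1/2)·L·i_d(t)² + (1/2)·L·i_q(t)², the input u₁(t) = (I·sin(δ(t)), I·cos(δ(t))) and the output y₁(t) = (R_L·(i_d(t) + I·sin(δ(t))), R_L·(i_q(t) + I·cos(δ(t)))). Then for all t, the derivative of V at t satisfies V'(t) ≤ y₁(t)·u₁(t), i.e. V'(t) ≤ R_L·(i_d(t) + I·sin(δ(t)))·I·sin(δ(t)) + R_L·(i_q(t) + I·cos(δ(t)))·I·cos(δ(t)). (Passivity from current input to voltage output.) -/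
open Real

/-!
Along solutions the coupling terms `± L ω i_d i_q` and `± b ω i_q` cancel in
`V' = J ω ω' + L i_d i_d' + L i_q i_q'`, leaving `V' = -D ω² - R |i|² - R_L ⟪i, u₁⟫`.
As `y₁ = R_L (i + u₁)`, completing the square gives
`y₁ · u₁ - V' = D ω² + (R_s + R_l) |i|² + R_L |i + u₁|² ≥ 0`.
-/

theorem HasDerivAt.half_const_mul_sq {f : ℝ → ℝ} {f' t : ℝ} (hf : HasDerivAt f f' t) (c : ℝ) :
    HasDerivAt (fun s => 1 / 2 * c * f s ^ 2) (c * f t * f') t :=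
  ((hf.pow 2).const_mul (1 / 2 * c)).congr_deriv (by ring)

theorem sm_energy_rate_eq {J L D R R_L b I θ ω i_d i_q ω' i_d' i_q' : ℝ}
    (hω : J * ω' = -D * ω - b * i_q)
    (hid : L * i_d' = -R * i_d + L * ω * i_q - R_L * I * sin θ)
    (hiq : L * i_q' = -R * i_q - L * ω * i_d + b * ω - R_L * I * cos θ) :
    J * ω * ω' + L * i_d * i_d' + L * i_q * i_q'
      = -D * ω ^ 2 - R * (i_d ^ 2 + i_q ^ 2) - R_L * (i_d * (I * sin θ) + i_q * (I * cos θ)) := by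
  linear_combination ω * hω + i_d * hid + i_q * hiq

theorem sm_energy_rate_le_supply {D R_s R_l R_L : ℝ} (hD : 0 ≤ D) (hRs : 0 ≤ R_s)
    (hRl : 0 ≤ R_l) (hRL : 0 ≤ R_L) (ω i_d i_q u_d u_q : ℝ) :
    -D * ω ^ 2 - (R_s + R_l + R_L) * (i_d ^ 2 + i_q ^ 2) - R_L * (i_d * u_d + i_q * u_q)
      ≤ R_L * (i_d + u_d) * u_d + R_L * (i_q + u_q) * u_q := by
  have hsq : R_L * (i_d + u_d) * u_d + R_L * (i_q + u_q) * u_q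
      - (-D * ω ^ 2 - (R_s + R_l + R_L) * (i_d ^ 2 + i_q ^ 2) - R_L * (i_d * u_d + i_q * u_q))
      = D * ω ^ 2 + (R_s + R_l) * (i_d ^ 2 + i_q ^ 2) + R_L * ((i_d + u_d) ^ 2 + (i_q + u_q) ^ 2) := by
    ring
  have hRsl := add_nonneg hRs hRl
  have hdiss : 0 ≤ D * ω ^ 2 + (R_s + R_l) * (i_d ^ 2 + i_q ^ 2)
      + R_L * ((i_d + u_d) ^ 2 + (i_q + u_q) ^ 2) := by
    positivity
  linarith

theorem sm_passivity_general
    (J L D R_s R_l R_L b I R : ℝ)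
    (hD : 0 < D)
    (hRs : 0 ≤ R_s) (hRl : 0 ≤ R_l) (hRL : 0 < R_L)
    (hR : R = R_s + R_l + R_L)
    (δ ω i_d i_q ω' i_d' i_q' : ℝ → ℝ)
    (hω : ∀ t, HasDerivAt ω (ω' t) t)
    (hid : ∀ t, HasDerivAt i_d (i_d' t) t)
    (hiq : ∀ t, HasDerivAt i_q (i_q' t) t)
    (heq2 : ∀ t, J * ω' t = -D * ω t - b * i_q t)
    (heq3 : ∀ t, L * i_d' t = -R * i_d t + L * ω t * i_q t - R_L * I * Real.sin (δ t))
    (heq4 : ∀ t, L * i_q' t = -R * i_q t - L * ω t * i_d t + b * ω t - R_L * I * Real.cos (δ t)) :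
    ∀ t, deriv (fun s => (1/2) * J * ω s ^ 2 + (1/2) * L * i_d s ^ 2
            + (1/2) * L * i_q s ^ 2) t
      ≤ R_L * (i_d t + I * Real.sin (δ t)) * (I * Real.sin (δ t))
        + R_L * (i_q t + I * Real.cos (δ t)) * (I * Real.cos (δ t)) := by
  intro t
  have hV : HasDerivAt (fun s => (1/2) * J * ω s ^ 2 + (1/2) * L * i_d s ^ 2
      + (1/2) * L * i_q s ^ 2) (J * ω t * ω' t + L * i_d t * i_d' t + L * i_q t * i_q' t) t :=
    (((hω t).half_const_mul_sq J).add ((hid t).half_const_mul_sq L)).add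
      ((hiq t).half_const_mul_sq L)
  rw [hV.deriv, sm_energy_rate_eq (heq2 t) (heq3 t) (heq4 t), hR]
  exact sm_energy_rate_le_supply hD.le hRs hRl hRL.le _ _ _ _ _

/-- Passivity of the synchronous machine dq-model from current input
`u₁ = (I sin δ, I cos δ)` to load-bus voltage output
`y₁ = (R_L (i_d + I sin δ), R_L (i_q + I cos δ))`, with mechanical torque `T_m = 0`. -/
theorem sm_passivity
    (J L D R_s R_l R_L b I ω_s R : ℝ)
    (hJ : 0 < J) (hL : 0 < L) (hD : 0 < D)
    (hRs : 0 ≤ R_s) (hRl : 0 ≤ R_l) (hRL : 0 < R_L)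
    (hR : R = R_s + R_l + R_L)
    (δ ω i_d i_q δ' ω' i_d' i_q' : ℝ → ℝ)
    (hδ : ∀ t, HasDerivAt δ (δ' t) t)
    (hω : ∀ t, HasDerivAt ω (ω' t) t)
    (hid : ∀ t, HasDerivAt i_d (i_d' t) t)
    (hiq : ∀ t, HasDerivAt i_q (i_q' t) t)
    (heq1 : ∀ t, δ' t = ω t - ω_s)
    (heq2 : ∀ t, J * ω' t = -D * ω t - b * i_q t)
    (heq3 : ∀ t, L * i_d' t = -R * i_d t + L * ω t * i_q t - R_L * I * Real.sin (δ t))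
    (heq4 : ∀ t, L * i_q' t = -R * i_q t - L * ω t * i_d t + b * ω t - R_L * I * Real.cos (δ t)) :
    ∀ t, deriv (fun s => (1/2) * J * ω s ^ 2 + (1/2) * L * i_d s ^ 2
            + (1/2) * L * i_q s ^ 2) t
      ≤ R_L * (i_d t + I * Real.sin (δ t)) * (I * Real.sin (δ t))
        + R_L * (i_q t + I * Real.cos (δ t)) * (I * Real.cos (δ t)) :=
  sm_passivity_general J L D R_s R_l R_L b I R hD hRs hRl hRL hR δ ω i_d i_q ω' i_d' i_q' hω hid hiq
    heq2 heq3 heq4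
end

section
/- Along any trajectory of the dq-frame synchronous machine model with T_m = 0 (differentiable δ, ω, i_d, i_q : ℝ → ℝ with δ'(t) = ω(t) − ω_s, J·ω'(t) = −D·ω(t) − b·i_q(t), L·i_d'(t) = −R·i_d(t) + L·ω(t)·i_q(t) − R_L·I·sin(δ(t)), L·i_q'(t) = −R·i_q(t) − L·ω(t)·i_d(t) + b·ω(t) − R_L·I·cos(δ(t))), the storage function V(t) = (1/2)·J·ω(t)² + (1/2)·L·i_d(t)² + (1/2)·L·i_q(t)² satisfies the exact energy-balance identity: V'(t) − (V_d(t)·I_d(t) + V_q(t)·I_q(t)) = −D·ω(t)² − (R_s + R_l)·(i_d(t)² + i_q(t)²) − R_L·(i_d(t) + I·sin(δ(t)))² − R_L·(i_q(t) + I·cos(δ(t)))², where V_d(t) = R_L·(i_d(t) + I·sin(δ(t))), V_q(t) = R_L·(i_q(t) + I·cos(δ(t))), I_d(t) = I·sin(δ(t)), I_q(t) = I·cos(δ(t)). -/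
open Real

/-- Exact energy-balance identity for the synchronous machine dq-model with `T_m = 0`:
`V' - (V_d I_d + V_q I_q) = -D ω² - (R_s+R_l)(i_d²+i_q²) - R_L(i_d + I sin δ)² - R_L(i_q + I cos δ)²`. -/
theorem sm_energy_balance
    (J L D R_s R_l R_L b I ω_s R : ℝ)
    (hJ : 0 < J) (hL : 0 < L)
    (hR : R = R_s + R_l + R_L)
    (δ ω i_d i_q δ' ω' i_d' i_q' : ℝ → ℝ)
    (hδ : ∀ t, HasDerivAt δ (δ' t) t)
    (hω : ∀ t, HasDerivAt ω (ω' t) t)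
    (hid : ∀ t, HasDerivAt i_d (i_d' t) t)
    (hiq : ∀ t, HasDerivAt i_q (i_q' t) t)
    (heq1 : ∀ t, δ' t = ω t - ω_s)
    (heq2 : ∀ t, J * ω' t = -D * ω t - b * i_q t)
    (heq3 : ∀ t, L * i_d' t = -R * i_d t + L * ω t * i_q t - R_L * I * Real.sin (δ t))
    (heq4 : ∀ t, L * i_q' t = -R * i_q t - L * ω t * i_d t + b * ω t - R_L * I * Real.cos (δ t))
    (V_d V_q I_d I_q : ℝ → ℝ)
    (hVd : ∀ t, V_d t = R_L * (i_d t + I * Real.sin (δ t)))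
    (hVq : ∀ t, V_q t = R_L * (i_q t + I * Real.cos (δ t)))
    (hId : ∀ t, I_d t = I * Real.sin (δ t))
    (hIq : ∀ t, I_q t = I * Real.cos (δ t)) :
    ∀ t, deriv (fun s => (1/2) * J * ω s ^ 2 + (1/2) * L * i_d s ^ 2
            + (1/2) * L * i_q s ^ 2) t
        - (V_d t * I_d t + V_q t * I_q t)
      = -D * ω t ^ 2 - (R_s + R_l) * (i_d t ^ 2 + i_q t ^ 2)
        - R_L * (i_d t + I * Real.sin (δ t)) ^ 2
        - R_L * (i_q t + I * Real.cos (δ t)) ^ 2 := by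
  intro t
  have hV : HasDerivAt (fun s => (1/2) * J * ω s ^ 2 + (1/2) * L * i_d s ^ 2
      + (1/2) * L * i_q s ^ 2)
      (J * ω t * ω' t + L * i_d t * i_d' t + L * i_q t * i_q' t) t := by
    have h1 := (((hω t).pow 2).const_mul ((1:ℝ)/2 * J))
    have h2 := (((hid t).pow 2).const_mul ((1:ℝ)/2 * L))
    have h3 := (((hiq t).pow 2).const_mul ((1:ℝ)/2 * L))
    have := (h1.add h2).add h3
    convert this using 1
    · rfl
    · rfl
    · rfl
    · ring
  rw [hV.deriv, hVd t, hVq t, hId t, hIq t]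
  have e2 := heq2 t
  have e3 := heq3 t
  have e4 := heq4 t
  subst hR
  linear_combination ω t * e2 + i_d t * e3 + i_q t * e4
end

section
/- Consider the shifted synchronous machine model: differentiable functions δ̃, ω̃, ĩ_d, ĩ_q : ℝ → ℝ satisfying for all t: δ̃'(t) = ω̃(t), J·ω̃'(t) = −D·ω̃(t) − b·ĩ_q(t), L·ĩ_d'(t) = −R·ĩ_d(t) − L·ω̃(t)·ĩ_q(t) − L·ω̃(t)·i_q^s − L·ω_s·ĩ_q(t) − R_L·I·(sin(δ̃(t) + δ_s) − sin(δ_s)), and L·ĩ_q'(t) = −R·ĩ_q(t) + L·ω̃(t)·ĩ_d(t) + L·ω̃(t)·i_d^s + L·ω_s·ĩ_d(t) + b·ω̃(t) − R_L·I·(cos(δ̃(t) + δ_s) − cos(δ_s)). Write sΔ(t) = sin(δ̃(t) + δ_s) − sin(δ_s) and cΔ(t) = cos(δ̃(t) + δ_s) − cos(δ_s). Assume the parameter condition (i_d^s)² + (i_q^s)² ≤ 4·D·(R_s + R_l)/L². Then the storage function V(t) = (1/2)·J·ω̃(t)² + (1/2)·L·ĩ_d(t)² + (1/2)·L·ĩ_q(t)²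 satisfies, for all t, V'(t) ≤ R_L·(ĩ_d(t) + I·sΔ(t))·I·sΔ(t) + R_L·(ĩ_q(t) + I·cΔ(t))·I·cΔ(t). (Passivity of the shifted system with input ũ₁ = (I·sΔ, I·cΔ) and output ỹ₁ = R_L·(ĩ_d + I·sΔ, ĩ_q + I·cΔ).) -/
open Real

/-- Passivity of the shifted synchronous machine model under the parameter condition
`(i_d^s)² + (i_q^s)² ≤ 4 D (R_s + R_l) / L²`. -/
theorem shifted_sm_passivity
    (J L D R_s R_l R_L b I ω_s δ_s i_ds i_qs R : ℝ)
    (hJ : 0 < J) (hL : 0 < L) (hD : 0 < D)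
    (hRsl : 0 < R_s + R_l) (hRL : 0 < R_L)
    (hR : R = R_s + R_l + R_L)
    (hcond : i_ds ^ 2 + i_qs ^ 2 ≤ 4 * D * (R_s + R_l) / L ^ 2)
    (δ ω i_d i_q δ' ω' i_d' i_q' : ℝ → ℝ)
    (sΔ cΔ : ℝ → ℝ)
    (hsΔ : ∀ t, sΔ t = Real.sin (δ t + δ_s) - Real.sin δ_s)
    (hcΔ : ∀ t, cΔ t = Real.cos (δ t + δ_s) - Real.cos δ_s)
    (hδ : ∀ t, HasDerivAt δ (δ' t) t)
    (hω : ∀ t, HasDerivAt ω (ω' t) t)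
    (hid : ∀ t, HasDerivAt i_d (i_d' t) t)
    (hiq : ∀ t, HasDerivAt i_q (i_q' t) t)
    (heq1 : ∀ t, δ' t = ω t)
    (heq2 : ∀ t, J * ω' t = -D * ω t - b * i_q t)
    (heq3 : ∀ t, L * i_d' t = -R * i_d t - L * ω t * i_q t - L * ω t * i_qs
        - L * ω_s * i_q t - R_L * I * sΔ t)
    (heq4 : ∀ t, L * i_q' t = -R * i_q t + L * ω t * i_d t + L * ω t * i_ds
        + L * ω_s * i_d t + b * ω t - R_L * I * cΔ t) :
    ∀ t, deriv (fun s => (1/2) * J * ω s ^ 2 + (1/2) * L * i_d s ^ 2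
            + (1/2) * L * i_q s ^ 2) t
      ≤ R_L * (i_d t + I * sΔ t) * (I * sΔ t)
        + R_L * (i_q t + I * cΔ t) * (I * cΔ t) := by
  intro t
  have hV : HasDerivAt (fun s => (1/2) * J * ω s ^ 2 + (1/2) * L * i_d s ^ 2
      + (1/2) * L * i_q s ^ 2)
      (J * ω t * ω' t + L * i_d t * i_d' t + L * i_q t * i_q' t) t := by
    have h1 := (((hω t).pow 2).const_mul ((1:ℝ)/2 * J))
    have h2 := (((hid t).pow 2).const_mul ((1:ℝ)/2 * L))
    have h3 := (((hiq t).pow 2).const_mul ((1:ℝ)/2 * L))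
    refine ((h1.add h2).add h3).congr_deriv ?_
    ring
  rw [hV.deriv]
  have hA : J * ω t * ω' t = ω t * (-D * ω t - b * i_q t) := by
    rw [← heq2 t]; ring
  have hB : L * i_d t * i_d' t = i_d t * (-R * i_d t - L * ω t * i_q t - L * ω t * i_qs
      - L * ω_s * i_q t - R_L * I * sΔ t) := by
    rw [← heq3 t]; ring
  have hC : L * i_q t * i_q' t = i_q t * (-R * i_q t + L * ω t * i_d t + L * ω t * i_ds
      + L * ω_s * i_d t + b * ω t - R_L * I * cΔ t) := by
    rw [← heq4 t]; ring
  rw [hA, hB, hC, hR]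
  have hcond' : (i_ds ^ 2 + i_qs ^ 2) * L ^ 2 ≤ 4 * D * (R_s + R_l) := by
    exact (le_div_iff₀ (by positivity)).mp hcond
  nlinarith [sq_nonneg (2 * (R_s + R_l) * i_d t + L * i_qs * ω t),
    sq_nonneg (2 * (R_s + R_l) * i_q t - L * i_ds * ω t),
    mul_nonneg (sub_nonneg.mpr hcond') (sq_nonneg (ω t)),
    mul_nonneg hRL.le (sq_nonneg (i_d t + I * sΔ t)),
    mul_nonneg hRL.le (sq_nonneg (i_q t + I * cΔ t)),
    mul_pos hRsl hRsl, sq_nonneg (ω t)]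
end

section
/- Consider the shifted synchronous machine model: differentiable functions δ̃, ω̃, ĩ_d, ĩ_q : ℝ → ℝ satisfying for all t: δ̃'(t) = ω̃(t), J·ω̃'(t) = −D·ω̃(t) − b·ĩ_q(t), L·ĩ_d'(t) = −R·ĩ_d(t) − L·ω̃(t)·ĩ_q(t) − L·ω̃(t)·i_q^s − L·ω_s·ĩ_q(t) − R_L·I·(sin(δ̃(t) + δ_s) − sin(δ_s)), and L·ĩ_q'(t) = −R·ĩ_q(t) + L·ω̃(t)·ĩ_d(t) + L·ω̃(t)·i_d^s + L·ω_s·ĩ_d(t) + b·ω̃(t) − R_L·I·(cos(δ̃(t) + δ_s) − cos(δ_s)). Assume the strict parameter condition (i_d^s)² + (i_q^s)² < 4·D·(R_s + R_l)/L². Then there exists ε > 0 such that the storage function V(t) = (1/2)·J·ω̃(t)² + (1/2)·L·ĩ_d(t)² + (1/2)·L·ĩ_q(t)² satisfies, for all t, V'(t) ≤ R_L·(ĩ_d(t) + I·sΔ(t))·I·sΔ(t) + R_L·(ĩ_q(t) + I·cΔ(t))·I·cΔ(t) − ε·(ω̃(t)² + ĩ_d(t)² + ĩ_q(t)²), where sΔ(t)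 = sin(δ̃(t) + δ_s) − sin(δ_s) and cΔ(t) = cos(δ̃(t) + δ_s) − cos(δ_s). (Strict passivity of the shifted system.) -/
open Real

private lemma sm_key (D c Lv θ ε a b w x y : ℝ) (hθ0 : 0 < θ)
    (hε1 : ε ≤ D - θ / 2)
    (hε2' : Lv ^ 2 * (a ^ 2 + b ^ 2) ≤ (c - ε) * (2 * θ)) :
    Lv * w * (a * y - b * x) ≤ (D - ε) * w ^ 2 + (c - ε) * (x ^ 2 + y ^ 2) := by
  have hcauchy : (a * y - b * x) ^ 2 ≤ (a ^ 2 + b ^ 2) * (x ^ 2 + y ^ 2) := by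
    nlinarith [sq_nonneg (a * x + b * y)]
  have hamgm : 2 * θ * (Lv * w * (a * y - b * x))
      ≤ θ ^ 2 * w ^ 2 + Lv ^ 2 * (a * y - b * x) ^ 2 := by
    nlinarith [sq_nonneg (θ * w - Lv * (a * y - b * x))]
  have h1 : Lv ^ 2 * (a * y - b * x) ^ 2 ≤ Lv ^ 2 * ((a ^ 2 + b ^ 2) * (x ^ 2 + y ^ 2)) := by
    nlinarith [sq_nonneg Lv, hcauchy]
  have h2 : θ ^ 2 * w ^ 2 ≤ 2 * θ * ((D - ε) * w ^ 2) := by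
    have hθle : θ ≤ 2 * (D - ε) := by linarith
    have := mul_le_mul_of_nonneg_left hθle (mul_nonneg hθ0.le (sq_nonneg w))
    nlinarith [this]
  have h3 : Lv ^ 2 * ((a ^ 2 + b ^ 2) * (x ^ 2 + y ^ 2))
      ≤ 2 * θ * ((c - ε) * (x ^ 2 + y ^ 2)) := by
    nlinarith [hε2', sq_nonneg x, sq_nonneg y]
  nlinarith [hamgm, h1, h2, h3, hθ0]

private lemma sm_final (D c R_L ε Lv bb ωs Iv a b w x y sD cD : ℝ)
    (hRL : 0 < R_L)
    (hkey : Lv * w * (a * y - b * x) ≤ (D - ε) * w ^ 2 + (c - ε) * (x ^ 2 + y ^ 2)) :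
    w * (-D * w - bb * y)
      + x * (-(c + R_L) * x - Lv * w * y - Lv * w * b - Lv * ωs * y - R_L * Iv * sD)
      + y * (-(c + R_L) * y + Lv * w * x + Lv * w * a + Lv * ωs * x + bb * w - R_L * Iv * cD)
    ≤ R_L * (x + Iv * sD) * (Iv * sD) + R_L * (y + Iv * cD) * (Iv * cD)
      - ε * (w ^ 2 + x ^ 2 + y ^ 2) := by
  nlinarith [hkey, mul_nonneg hRL.le (sq_nonneg (x + Iv * sD)),
    mul_nonneg hRL.le (sq_nonneg (y + Iv * cD))]

/-- Strict passivity of the shifted synchronous machine model under the strict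
parameter condition `(i_d^s)² + (i_q^s)² < 4 D (R_s + R_l) / L²`. -/
theorem shifted_sm_strict_passivity
    (J L D R_s R_l R_L b I ω_s δ_s i_ds i_qs R : ℝ)
    (hJ : 0 < J) (hL : 0 < L) (hD : 0 < D)
    (hRsl : 0 < R_s + R_l) (hRL : 0 < R_L)
    (hR : R = R_s + R_l + R_L)
    (hcond : i_ds ^ 2 + i_qs ^ 2 < 4 * D * (R_s + R_l) / L ^ 2)
    (δ ω i_d i_q δ' ω' i_d' i_q' : ℝ → ℝ)
    (sΔ cΔ : ℝ → ℝ)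
    (hsΔ : ∀ t, sΔ t = Real.sin (δ t + δ_s) - Real.sin δ_s)
    (hcΔ : ∀ t, cΔ t = Real.cos (δ t + δ_s) - Real.cos δ_s)
    (hδ : ∀ t, HasDerivAt δ (δ' t) t)
    (hω : ∀ t, HasDerivAt ω (ω' t) t)
    (hid : ∀ t, HasDerivAt i_d (i_d' t) t)
    (hiq : ∀ t, HasDerivAt i_q (i_q' t) t)
    (heq1 : ∀ t, δ' t = ω t)
    (heq2 : ∀ t, J * ω' t = -D * ω t - b * i_q t)
    (heq3 : ∀ t, L * i_d' t = -R * i_d t - L * ω t * i_q t - L * ω t * i_qs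
        - L * ω_s * i_q t - R_L * I * sΔ t)
    (heq4 : ∀ t, L * i_q' t = -R * i_q t + L * ω t * i_d t + L * ω t * i_ds
        + L * ω_s * i_d t + b * ω t - R_L * I * cΔ t) :
    ∃ ε > 0, ∀ t, deriv (fun s => (1/2) * J * ω s ^ 2 + (1/2) * L * i_d s ^ 2
            + (1/2) * L * i_q s ^ 2) t
      ≤ R_L * (i_d t + I * sΔ t) * (I * sΔ t)
        + R_L * (i_q t + I * cΔ t) * (I * cΔ t)
        - ε * (ω t ^ 2 + i_d t ^ 2 + i_q t ^ 2) := by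
  set c : ℝ := R_s + R_l with hc
  set K : ℝ := i_ds ^ 2 + i_qs ^ 2 with hK
  have hK0 : 0 ≤ K := by positivity
  have hKlt : L ^ 2 * K < 4 * D * c := by
    have h := (lt_div_iff₀ (by positivity : (0:ℝ) < L ^ 2)).mp hcond
    linarith [h, mul_comm K (L ^ 2)]
  set θ : ℝ := (2 * D + L ^ 2 * K / (2 * c)) / 2 with hθdef
  have hθ0 : 0 < θ := by
    have : 0 ≤ L ^ 2 * K / (2 * c) := by positivity
    simp only [hθdef]; linarith
  have hθlt : θ < 2 * D := by
    have h1 : L ^ 2 * K / (2 * c) < 2 * D := by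
      rw [div_lt_iff₀ (by linarith : (0:ℝ) < 2 * c)]; nlinarith
    simp only [hθdef]; linarith
  have hθgt : L ^ 2 * K < 2 * θ * c := by
    have h1 : L ^ 2 * K / (2 * c) ≤ θ := by
      have h2 : L ^ 2 * K / (2 * c) < 2 * D := by
        rw [div_lt_iff₀ (by linarith : (0:ℝ) < 2 * c)]; nlinarith
      simp only [hθdef]; linarith
    have h3 : L ^ 2 * K = L ^ 2 * K / (2 * c) * (2 * c) := by
      field_simp
    nlinarith [hθlt, hθ0]
  set ε : ℝ := min (D - θ / 2) (c - L ^ 2 * K / (2 * θ)) with hεdef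
  have hε1 : ε ≤ D - θ / 2 := min_le_left _ _
  have hε2 : ε ≤ c - L ^ 2 * K / (2 * θ) := min_le_right _ _
  have hε2' : L ^ 2 * K ≤ (c - ε) * (2 * θ) := by
    have : L ^ 2 * K / (2 * θ) ≤ c - ε := by linarith
    calc L ^ 2 * K = L ^ 2 * K / (2 * θ) * (2 * θ) := by field_simp
      _ ≤ (c - ε) * (2 * θ) := by nlinarith [hθ0]
  have hε0 : 0 < ε := by
    apply lt_min
    · linarith
    · have : L ^ 2 * K / (2 * θ) < c := by
        rw [div_lt_iff₀ (by linarith : (0:ℝ) < 2 * θ)]; nlinarith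
      linarith
  clear_value c K θ ε
  refine ⟨ε, hε0, fun t => ?_⟩
  have hV : deriv (fun s => (1/2) * J * ω s ^ 2 + (1/2) * L * i_d s ^ 2
      + (1/2) * L * i_q s ^ 2) t
      = J * ω t * ω' t + L * i_d t * i_d' t + L * i_q t * i_q' t := by
    have h1 : HasDerivAt (fun s => (1/2) * J * ω s ^ 2 + (1/2) * L * i_d s ^ 2
        + (1/2) * L * i_q s ^ 2)
        ((1/2) * J * (2 * ω t ^ 1 * ω' t) + (1/2) * L * (2 * i_d t ^ 1 * i_d' t)
          + (1/2) * L * (2 * i_q t ^ 1 * i_q' t)) t := by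
      exact ((((hω t).pow 2).const_mul _).add (((hid t).pow 2).const_mul _)).add
        (((hiq t).pow 2).const_mul _)
    rw [h1.deriv]; ring
  rw [hV]
  have e2 : ω t * (J * ω' t) = ω t * (-D * ω t - b * i_q t) := by rw [heq2 t]
  have e3 : i_d t * (L * i_d' t) = i_d t * (-(c + R_L) * i_d t - L * ω t * i_q t
      - L * ω t * i_qs - L * ω_s * i_q t - R_L * I * sΔ t) := by rw [heq3 t, hR]
  have e4 : i_q t * (L * i_q' t) = i_q t * (-(c + R_L) * i_q t + L * ω t * i_d t
      + L * ω t * i_ds + L * ω_s * i_d t + b * ω t - R_L * I * cΔ t) := by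
    rw [heq4 t, hR]
  have hkey := sm_key D c L θ ε i_ds i_qs (ω t) (i_d t) (i_q t) hθ0 hε1 (by rw [← hK]; exact hε2')
  have hfin := sm_final D c R_L ε L b ω_s I i_ds i_qs (ω t) (i_d t) (i_q t) (sΔ t) (cΔ t)
    hRL hkey
  have hsum : J * ω t * ω' t + L * i_d t * i_d' t + L * i_q t * i_q' t
      = ω t * (J * ω' t) + i_d t * (L * i_d' t) + i_q t * (L * i_q' t) := by ring
  rw [hsum, e2, e3, e4]
  linarith [hfin]
end

section
/- Consider the shifted synchronous machine model: differentiable functions δ̃, ω̃, ĩ_d, ĩ_q : ℝ → ℝ satisfying for all t: δ̃'(t) = ω̃(t), J·ω̃'(t) = −D·ω̃(t) − b·ĩ_q(t), L·ĩ_d'(t) = −R·ĩ_d(t) − L·ω̃(t)·ĩ_q(t) − L·ω̃(t)·i_q^s − L·ω_s·ĩ_q(t) − R_L·I·(sin(δ̃(t) + δ_s) − sin(δ_s)), and L·ĩ_q'(t) = −R·ĩ_q(t) + L·ω̃(t)·ĩ_d(t) + L·ω̃(t)·i_d^s + L·ω_s·ĩ_d(t) + b·ω̃(t) − R_L·I·(cos(δ̃(t)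 + δ_s) − cos(δ_s)). Write Ĩ_d(t) = I·(sin(δ̃(t) + δ_s) − sin(δ_s)) and Ĩ_q(t) = I·(cos(δ̃(t) + δ_s) − cos(δ_s)). Assume the parameter condition (i_d^s)² + (i_q^s)² ≤ 4·D·(R_s + R_l)/L². Then the storage function V(t) = (1/2)·J·ω̃(t)² + (1/2)·L·ĩ_d(t)² + (1/2)·L·ĩ_q(t)² satisfies, for all t, V'(t) ≤ R_L·(Ĩ_d(t)·(Ĩ_d(t) − ĩ_d(t)) + Ĩ_q(t)·(Ĩ_q(t) − ĩ_q(t))). (Nonlinear negative-imaginary property of the shifted system with input ũ₂ = (shifted electromagnetic torque) and output ỹ₂ = δ̃, whose supply rate ỹ₂'·ũ₂ equals the right-hand side.) -/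
open Real

/-- Nonlinear negative-imaginary property of the shifted synchronous machine model:
with `Itil_d = I sΔ` and `Itil_q = I cΔ`, the storage function satisfies
`V' ≤ R_L (Itil_d (Itil_d − ĩ_d) + Itil_q (Itil_q − ĩ_q))` under the parameter condition. -/
theorem shifted_sm_nni
    (J L D R_s R_l R_L b I ω_s δ_s i_ds i_qs R : ℝ)
    (hJ : 0 < J) (hL : 0 < L) (hD : 0 < D)
    (hRsl : 0 < R_s + R_l) (hRL : 0 < R_L)
    (hR : R = R_s + R_l + R_L)
    (hcond : i_ds ^ 2 + i_qs ^ 2 ≤ 4 * D * (R_s + R_l) / L ^ 2)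
    (δ ω i_d i_q δ' ω' i_d' i_q' : ℝ → ℝ)
    (Itil_d Itil_q : ℝ → ℝ)
    (hItild : ∀ t, Itil_d t = I * (Real.sin (δ t + δ_s) - Real.sin δ_s))
    (hItilq : ∀ t, Itil_q t = I * (Real.cos (δ t + δ_s) - Real.cos δ_s))
    (hδ : ∀ t, HasDerivAt δ (δ' t) t)
    (hω : ∀ t, HasDerivAt ω (ω' t) t)
    (hid : ∀ t, HasDerivAt i_d (i_d' t) t)
    (hiq : ∀ t, HasDerivAt i_q (i_q' t) t)
    (heq1 : ∀ t, δ' t = ω t)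
    (heq2 : ∀ t, J * ω' t = -D * ω t - b * i_q t)
    (heq3 : ∀ t, L * i_d' t = -R * i_d t - L * ω t * i_q t - L * ω t * i_qs
        - L * ω_s * i_q t - R_L * I * (Real.sin (δ t + δ_s) - Real.sin δ_s))
    (heq4 : ∀ t, L * i_q' t = -R * i_q t + L * ω t * i_d t + L * ω t * i_ds
        + L * ω_s * i_d t + b * ω t - R_L * I * (Real.cos (δ t + δ_s) - Real.cos δ_s)) :
    ∀ t, deriv (fun s => (1/2) * J * ω s ^ 2 + (1/2) * L * i_d s ^ 2
            + (1/2) * L * i_q s ^ 2) t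
      ≤ R_L * (Itil_d t * (Itil_d t - i_d t) + Itil_q t * (Itil_q t - i_q t)) := by
  intro t
  have hV : HasDerivAt (fun s => (1/2) * J * ω s ^ 2 + (1/2) * L * i_d s ^ 2
      + (1/2) * L * i_q s ^ 2)
      (J * ω t * ω' t + L * i_d t * i_d' t + L * i_q t * i_q' t) t := by
    have h1 := (((hω t).fun_pow 2).const_mul ((1:ℝ)/2 * J))
    have h2 := (((hid t).fun_pow 2).const_mul ((1:ℝ)/2 * L))
    have h3 := (((hiq t).fun_pow 2).const_mul ((1:ℝ)/2 * L))
    have := (h1.fun_add h2).fun_add h3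
    exact this.congr_deriv (by norm_num [pow_one]; ring)
  rw [hV.deriv]
  have h2 : ω t * (J * ω' t) = ω t * (-D * ω t - b * i_q t) := by rw [heq2 t]
  have h3 : i_d t * (L * i_d' t) = i_d t * (-R * i_d t - L * ω t * i_q t - L * ω t * i_qs
      - L * ω_s * i_q t - R_L * I * (Real.sin (δ t + δ_s) - Real.sin δ_s)) := by rw [heq3 t]
  have h4 : i_q t * (L * i_q' t) = i_q t * (-R * i_q t + L * ω t * i_d t + L * ω t * i_ds
      + L * ω_s * i_d t + b * ω t - R_L * I * (Real.cos (δ t + δ_s) - Real.cos δ_s)) := by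
    rw [heq4 t]
  rw [hItild t, hItilq t]
  have hcond' : L ^ 2 * (i_ds ^ 2 + i_qs ^ 2) ≤ 4 * D * (R_s + R_l) := by
    rw [le_div_iff₀ (by positivity : (0:ℝ) < L ^ 2)] at hcond
    nlinarith [hcond]
  have key : ω t ^ 2 * (L ^ 2 * (i_ds ^ 2 + i_qs ^ 2)) ≤ ω t ^ 2 * (4 * D * (R_s + R_l)) :=
    mul_le_mul_of_nonneg_left hcond' (sq_nonneg _)
  have main : L * ω t * (i_ds * i_q t - i_qs * i_d t)
      ≤ D * ω t ^ 2 + (R_s + R_l) * (i_d t ^ 2 + i_q t ^ 2) := by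
    nlinarith [key, sq_nonneg (L * ω t * i_ds - 2 * (R_s + R_l) * i_q t),
      sq_nonneg (L * ω t * i_qs + 2 * (R_s + R_l) * i_d t), hRsl, mul_pos hRsl hRsl]
  have hsum : J * ω t * ω' t + L * i_d t * i_d' t + L * i_q t * i_q' t
      = -D * ω t ^ 2 - R * (i_d t ^ 2 + i_q t ^ 2)
        + L * ω t * (i_ds * i_q t - i_qs * i_d t)
        - R_L * (I * (Real.sin (δ t + δ_s) - Real.sin δ_s)) * i_d t
        - R_L * (I * (Real.cos (δ t + δ_s) - Real.cos δ_s)) * i_q t := by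
    linear_combination h2 + h3 + h4
  rw [hsum, hR]
  nlinarith [main,
    mul_nonneg hRL.le (sq_nonneg (I * (Real.sin (δ t + δ_s) - Real.sin δ_s))),
    mul_nonneg hRL.le (sq_nonneg (I * (Real.cos (δ t + δ_s) - Real.cos δ_s))),
    mul_nonneg hRL.le (sq_nonneg (i_d t)), mul_nonneg hRL.le (sq_nonneg (i_q t))]
end

section
/- Consider the shifted synchronous machine model interconnected in negative feedback with a droop-based PI torque controller: differentiable functions δ̃, ω̃, ĩ_d, ĩ_q, z̃ : ℝ → ℝ satisfying for all t: δ̃'(t) = ω̃(t), J·ω̃'(t) = −D·ω̃(t) − b·ĩ_q(t) − T̃_m(t) with T̃_m(t) = k_p·ω̃(t) + k_i·z̃(t) and z̃'(t) = ω̃(t), L·ĩ_d'(t) = −R·ĩ_d(t) − L·ω̃(t)·ĩ_q(t) − L·ω̃(t)·i_q^s − L·ω_s·ĩ_q(t) − R_L·I·sΔ(t), and L·ĩ_q'(t) = −R·ĩ_q(t) + L·ω̃(t)·ĩ_d(t) + L·ω̃(t)·i_d^s + L·ω_s·ĩ_d(t) + b·ω̃(t) − R_L·I·cΔ(t), where sΔ(t)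 = sin(δ̃(t) + δ_s) − sin(δ_s) and cΔ(t) = cos(δ̃(t) + δ_s) − cos(δ_s). Assume k_p ≥ 0, k_i ≥ 0 and the parameter condition (i_d^s)² + (i_q^s)² ≤ 4·D·(R_s + R_l)/L². Then the total storage function V_t(t) = (1/2)·J·ω̃(t)² + (1/2)·L·ĩ_d(t)² + (1/2)·L·ĩ_q(t)² + (1/2)·k_i·z̃(t)² satisfies, for all t, V_t'(t) ≤ R_L·(ĩ_d(t) + I·sΔ(t))·I·sΔ(t) + R_L·(ĩ_q(t) + I·cΔ(t))·I·cΔ(t). (The closed-loop system with a passive droop controller remains passive with the same supply rate.) -/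
open Real

set_option maxHeartbeats 1000000 in
/-- Passivity of the shifted synchronous machine model interconnected in negative
feedback with a droop-based PI torque controller `T̃_m = k_p ω̃ + k_i z̃`, `z̃' = ω̃`:
the closed loop is passive with the same supply rate. -/
theorem shifted_sm_droop_passivity
    (J L D R_s R_l R_L b I ω_s δ_s i_ds i_qs k_p k_i R : ℝ)
    (hJ : 0 < J) (hL : 0 < L) (hD : 0 < D)
    (hRsl : 0 < R_s + R_l) (hRL : 0 < R_L)
    (hkp : 0 ≤ k_p) (hki : 0 ≤ k_i)
    (hR : R = R_s + R_l + R_L)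
    (hcond : i_ds ^ 2 + i_qs ^ 2 ≤ 4 * D * (R_s + R_l) / L ^ 2)
    (δ ω i_d i_q z δ' ω' i_d' i_q' z' : ℝ → ℝ)
    (T_m sΔ cΔ : ℝ → ℝ)
    (hsΔ : ∀ t, sΔ t = Real.sin (δ t + δ_s) - Real.sin δ_s)
    (hcΔ : ∀ t, cΔ t = Real.cos (δ t + δ_s) - Real.cos δ_s)
    (hTm : ∀ t, T_m t = k_p * ω t + k_i * z t)
    (hδ : ∀ t, HasDerivAt δ (δ' t) t)
    (hω : ∀ t, HasDerivAt ω (ω' t) t)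
    (hid : ∀ t, HasDerivAt i_d (i_d' t) t)
    (hiq : ∀ t, HasDerivAt i_q (i_q' t) t)
    (hz : ∀ t, HasDerivAt z (z' t) t)
    (heq1 : ∀ t, δ' t = ω t)
    (heq2 : ∀ t, J * ω' t = -D * ω t - b * i_q t - T_m t)
    (heqz : ∀ t, z' t = ω t)
    (heq3 : ∀ t, L * i_d' t = -R * i_d t - L * ω t * i_q t - L * ω t * i_qs
        - L * ω_s * i_q t - R_L * I * sΔ t)
    (heq4 : ∀ t, L * i_q' t = -R * i_q t + L * ω t * i_d t + L * ω t * i_ds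
        + L * ω_s * i_d t + b * ω t - R_L * I * cΔ t) :
    ∀ t, deriv (fun s => (1/2) * J * ω s ^ 2 + (1/2) * L * i_d s ^ 2
            + (1/2) * L * i_q s ^ 2 + (1/2) * k_i * z s ^ 2) t
      ≤ R_L * (i_d t + I * sΔ t) * (I * sΔ t)
        + R_L * (i_q t + I * cΔ t) * (I * cΔ t) := by
  intro t
  have hV : HasDerivAt (fun s => (1/2) * J * ω s ^ 2 + (1/2) * L * i_d s ^ 2
      + (1/2) * L * i_q s ^ 2 + (1/2) * k_i * z s ^ 2)
      ((1/2) * J * (2 * ω t ^ 1 * ω' t) + (1/2) * L * (2 * i_d t ^ 1 * i_d' t)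
        + (1/2) * L * (2 * i_q t ^ 1 * i_q' t) + (1/2) * k_i * (2 * z t ^ 1 * z' t)) t := by
    exact ((((hω t).pow 2).const_mul _).add (((hid t).pow 2).const_mul _)).add
      (((hiq t).pow 2).const_mul _) |>.add (((hz t).pow 2).const_mul _)
  rw [hV.deriv]
  have h2 : J * ω' t * ω t = (-D * ω t - b * i_q t - (k_p * ω t + k_i * z t)) * ω t := by
    rw [heq2 t, hTm t]
  have h3 : L * i_d' t * i_d t = (-R * i_d t - L * ω t * i_q t - L * ω t * i_qs
      - L * ω_s * i_q t - R_L * I * sΔ t) * i_d t := by rw [heq3 t]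
  have h4 : L * i_q' t * i_q t = (-R * i_q t + L * ω t * i_d t + L * ω t * i_ds
      + L * ω_s * i_d t + b * ω t - R_L * I * cΔ t) * i_q t := by rw [heq4 t]
  have h5 : z' t = ω t := heqz t
  have hc : (i_ds ^ 2 + i_qs ^ 2) * L ^ 2 ≤ 4 * D * (R_s + R_l) := by
    rw [← le_div_iff₀ (by positivity : (0:ℝ) < L ^ 2)]; exact hcond
  have key : 0 ≤ D * ω t ^ 2 + (R_s + R_l) * (i_d t ^ 2 + i_q t ^ 2)
      + L * ω t * (i_qs * i_d t - i_ds * i_q t) := by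
    nlinarith [sq_nonneg (2 * D * ω t + L * (i_qs * i_d t - i_ds * i_q t)),
      sq_nonneg (i_qs * i_q t + i_ds * i_d t), sq_nonneg (i_qs * i_d t - i_ds * i_q t),
      mul_nonneg hRsl.le (sq_nonneg (i_d t)), mul_nonneg hRsl.le (sq_nonneg (i_q t)),
      mul_nonneg hD.le (sq_nonneg (ω t)),
      mul_nonneg hRsl.le (add_nonneg (sq_nonneg (i_d t)) (sq_nonneg (i_q t))),
      mul_le_mul_of_nonneg_right hc (add_nonneg (sq_nonneg (i_d t)) (sq_nonneg (i_q t)))]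
  have hE : (1/2) * J * (2 * ω t ^ 1 * ω' t) + (1/2) * L * (2 * i_d t ^ 1 * i_d' t)
      + (1/2) * L * (2 * i_q t ^ 1 * i_q' t) + (1/2) * k_i * (2 * z t ^ 1 * z' t)
      = ω t * (J * ω' t) + i_d t * (L * i_d' t) + i_q t * (L * i_q' t)
        + k_i * z t * z' t := by ring
  rw [hE, heq2 t, heq3 t, heq4 t, h5, hTm t, hR]
  nlinarith [key, mul_nonneg hkp (sq_nonneg (ω t)),
    mul_nonneg hRL.le (sq_nonneg (i_d t + I * sΔ t)),
    mul_nonneg hRL.le (sq_nonneg (i_q t + I * cΔ t))]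
end

section
/- Let R_sl > 0 and let D, L, i_d^s, i_q^s be real numbers with D > L²·((i_d^s)² + (i_q^s)²)/(4·R_sl). Then the quadratic form Q(x, y, z) = R_sl·x² + R_sl·y² + D·z² + L·i_q^s·x·z − L·i_d^s·y·z is positive definite: Q(x, y, z) > 0 for all (x, y, z) ∈ ℝ³ with (x, y, z) ≠ (0, 0, 0). -/
open Real

/-- Strict Schur-complement condition: if `D > L² ((i_d^s)² + (i_q^s)²) / (4 R_sl)`,
the quadratic form `Q(x,y,z) = R_sl x² + R_sl y² + D z² + L i_q^s x z − L i_d^s y z`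
is positive definite. -/
theorem schur_condition_strict
    (R_sl D L i_ds i_qs : ℝ) (hRsl : 0 < R_sl)
    (hD : D > L ^ 2 * (i_ds ^ 2 + i_qs ^ 2) / (4 * R_sl)) :
    ∀ x y z : ℝ, (x, y, z) ≠ (0, 0, 0) →
      0 < R_sl * x ^ 2 + R_sl * y ^ 2 + D * z ^ 2
        + L * i_qs * x * z - L * i_ds * y * z := by
  intro x y z hxyz
  have hD' : L ^ 2 * (i_ds ^ 2 + i_qs ^ 2) < 4 * R_sl * D := by
    have := (div_lt_iff₀ (by positivity : (0:ℝ) < 4 * R_sl)).mp hD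
    linarith
  rcases eq_or_ne z 0 with hz | hz
  · subst hz
    have h : x ≠ 0 ∨ y ≠ 0 := by
      by_contra h
      push_neg at h
      exact hxyz (by simp [h.1, h.2])
    rcases h with h | h <;> nlinarith [sq_nonneg x, sq_nonneg y, pow_pos (abs_pos.mpr h) 2, sq_abs x, sq_abs y]
  · nlinarith [sq_nonneg (2 * R_sl * x + L * i_qs * z), sq_nonneg (2 * R_sl * y - L * i_ds * z), pow_pos (abs_pos.mpr hz) 2, sq_abs z, mul_pos hRsl hRsl]
end

section
/- Along any trajectory of the shifted synchronous machine model (differentiable δ̃, ω̃, ĩ_d, ĩ_q : ℝ → ℝ with δ̃'(t) = ω̃(t), J·ω̃'(t) = −D·ω̃(t) − b·ĩ_q(t), L·ĩ_d'(t) = −R·ĩ_d(t) − L·ω̃(t)·ĩ_q(t) − L·ω̃(t)·i_q^s − L·ω_s·ĩ_q(t) − R_L·I·sΔ(t), L·ĩ_q'(t) = −R·ĩ_q(t) + L·ω̃(t)·ĩ_d(t) + L·ω̃(t)·i_d^s + L·ω_s·ĩ_d(t) + b·ω̃(t) − R_L·I·cΔ(t), where sΔ(t) = sin(δ̃(t)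 + δ_s) − sin(δ_s) and cΔ(t) = cos(δ̃(t) + δ_s) − cos(δ_s)), the storage function V(t) = (1/2)·J·ω̃(t)² + (1/2)·L·ĩ_d(t)² + (1/2)·L·ĩ_q(t)² satisfies the exact identity: V'(t) = −D·ω̃(t)² − R·(ĩ_d(t)² + ĩ_q(t)²) + L·ω̃(t)·(ĩ_q(t)·i_d^s − ĩ_d(t)·i_q^s) − R_L·I·(ĩ_d(t)·sΔ(t) + ĩ_q(t)·cΔ(t)). -/
/-! The rate of `V` is `ω̃ (J ω̃') + ĩ_d (L ĩ_d') + ĩ_q (L ĩ_q')`. Substituting the dynamics, the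
gyrator terms `L ω̃ ĩ_d ĩ_q` and `L ω_s ĩ_d ĩ_q` and the coupling terms `b ω̃ ĩ_q` cancel in pairs,
which leaves exactly the right-hand side. -/

theorem HasDerivAt.half_mul_sq {f : ℝ → ℝ} {f' t : ℝ} (c : ℝ) (hf : HasDerivAt f f' t) :
    HasDerivAt (fun s => 1 / 2 * c * f s ^ 2) (c * f t * f') t := by
  refine ((hf.fun_pow 2).const_mul (1 / 2 * c)).congr_deriv ?_
  norm_num
  ring

theorem shifted_sm_energy_identity_general
    (J L D R_L b I ω_s i_ds i_qs R : ℝ)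
    (ω i_d i_q ω' i_d' i_q' : ℝ → ℝ)
    (sΔ cΔ : ℝ → ℝ)
    (hω : ∀ t, HasDerivAt ω (ω' t) t)
    (hid : ∀ t, HasDerivAt i_d (i_d' t) t)
    (hiq : ∀ t, HasDerivAt i_q (i_q' t) t)
    (heq2 : ∀ t, J * ω' t = -D * ω t - b * i_q t)
    (heq3 : ∀ t, L * i_d' t = -R * i_d t - L * ω t * i_q t - L * ω t * i_qs
        - L * ω_s * i_q t - R_L * I * sΔ t)
    (heq4 : ∀ t, L * i_q' t = -R * i_q t + L * ω t * i_d t + L * ω t * i_ds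
        + L * ω_s * i_d t + b * ω t - R_L * I * cΔ t) :
    ∀ t, deriv (fun s => (1/2) * J * ω s ^ 2 + (1/2) * L * i_d s ^ 2
            + (1/2) * L * i_q s ^ 2) t
      = -D * ω t ^ 2 - R * (i_d t ^ 2 + i_q t ^ 2)
        + L * ω t * (i_q t * i_ds - i_d t * i_qs)
        - R_L * I * (i_d t * sΔ t + i_q t * cΔ t) := by
  intro t
  have hV := (((hω t).half_mul_sq J).add ((hid t).half_mul_sq L)).add ((hiq t).half_mul_sq L)
  refine hV.deriv.trans ?_
  linear_combination ω t * heq2 t + i_d t * heq3 t + i_q t * heq4 t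

/-- Exact storage-rate identity for the shifted synchronous machine model:
`V' = −D ω̃² − R (ĩ_d² + ĩ_q²) + L ω̃ (ĩ_q i_d^s − ĩ_d i_q^s) − R_L I (ĩ_d sΔ + ĩ_q cΔ)`. -/
theorem shifted_sm_energy_identity
    (J L D R_s R_l R_L b I ω_s δ_s i_ds i_qs R : ℝ)
    (hJ : 0 < J) (hL : 0 < L)
    (hR : R = R_s + R_l + R_L)
    (δ ω i_d i_q δ' ω' i_d' i_q' : ℝ → ℝ)
    (sΔ cΔ : ℝ → ℝ)
    (hsΔ : ∀ t, sΔ t = Real.sin (δ t + δ_s) - Real.sin δ_s)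
    (hcΔ : ∀ t, cΔ t = Real.cos (δ t + δ_s) - Real.cos δ_s)
    (hδ : ∀ t, HasDerivAt δ (δ' t) t)
    (hω : ∀ t, HasDerivAt ω (ω' t) t)
    (hid : ∀ t, HasDerivAt i_d (i_d' t) t)
    (hiq : ∀ t, HasDerivAt i_q (i_q' t) t)
    (heq1 : ∀ t, δ' t = ω t)
    (heq2 : ∀ t, J * ω' t = -D * ω t - b * i_q t)
    (heq3 : ∀ t, L * i_d' t = -R * i_d t - L * ω t * i_q t - L * ω t * i_qs
        - L * ω_s * i_q t - R_L * I * sΔ t)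
    (heq4 : ∀ t, L * i_q' t = -R * i_q t + L * ω t * i_d t + L * ω t * i_ds
        + L * ω_s * i_d t + b * ω t - R_L * I * cΔ t) :
    ∀ t, deriv (fun s => (1/2) * J * ω s ^ 2 + (1/2) * L * i_d s ^ 2
            + (1/2) * L * i_q s ^ 2) t
      = -D * ω t ^ 2 - R * (i_d t ^ 2 + i_q t ^ 2)
        + L * ω t * (i_q t * i_ds - i_d t * i_qs)
        - R_L * I * (i_d t * sΔ t + i_q t * cΔ t) :=
  shifted_sm_energy_identity_general J L D R_L b I ω_s i_ds i_qs R ω i_d i_q ω' i_d' i_q' sΔ cΔ hω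
    hid hiq heq2 heq3 heq4
end
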